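/- For the algebra A_2, if h = (r_u^v, r_i^j; a, r_ℓ^k) ∈ M(1,1) with r_u^v, r_i^j, r_ℓ^k ∈ R and a ∈ A_2, then h has constant rows or constant columns, i.e., h ∈ {(y,x;y,x), (x,x;y,y) : x,y ∈ A_2}. -/
import Mathlib


/-- The carrier of the algebra `𝔸₂ = ⟨A₂; t⟩`: `O = {oᵢʲ}`, `R = {rᵢʲ}`, and
`G` the set of formal products, so that `A2.g : A2² → G` is a fixed injection. -/
inductive A2 : Type where
  | o (i j : ℕ) : A2
  | r (i j : ℕ) : A2
  | g (x y : A2) : A2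
deriving DecidableEq

/-- The binary operation `t` of `𝔸₂`:
`t(r₄ᵢʲ, r₄ᵢʲ) = t(r₄ᵢʲ, r₄ᵢ₊₂ʲ) = oᵢʲ`, `t(r₄ᵢ₊₂ʲ, r₄ᵢʲ) = rᵢʲ⁺¹`,
`t(r₄ᵢ₊₂ʲ, r₄ᵢ₊₂ʲ) = rᵢ₊₁ʲ⁺¹`, and otherwise `t(x,y) = s(x,y)` for a fixed
injection `s : A₂² → G`. -/
def t2 : A2 → A2 → A2 :=
  fun x y =>
    match x, y with
    | .r a j, .r b l =>
        if l = j ∧ a % 4 = 0 ∧ (b = a ∨ b = a + 2) then .o (a / 4) j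
        else if l = j ∧ a % 4 = 2 ∧ b + 2 = a then .r (a / 4) (j + 1)
        else if l = j ∧ a % 4 = 2 ∧ b = a then .r (a / 4 + 1) (j + 1)
        else .g x y
    | x, y => .g x y

/-- `M(1,1)`: the subalgebra of `𝔸₂⁴` (coordinatewise `t`) generated by all
squares with constant columns `(x,x;y,y)` or constant rows `(x,y;x,y)`.
A quadruple `(h₁,h₂,h₃,h₄)` represents the square with columns `(h₁,h₂)` and
`(h₃,h₄)` and rows `(h₁,h₃)` and `(h₂,h₄)`. -/
inductive M11 : A2 × A2 × A2 × A2 → Prop where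
  | col (x y : A2) : M11 (x, x, y, y)
  | row (x y : A2) : M11 (x, y, x, y)
  | app (a₁ a₂ a₃ a₄ b₁ b₂ b₃ b₄ : A2) :
      M11 (a₁, a₂, a₃, a₄) → M11 (b₁, b₂, b₃, b₄) →
      M11 (t2 a₁ b₁, t2 a₂ b₂, t2 a₃ b₃, t2 a₄ b₄)

lemma tr {x y : A2} {p q : ℕ} (h : t2 x y = A2.r p q) :
    ∃ c m, x = A2.r (4*c+2) m ∧ (y = A2.r (4*c) m ∨ y = A2.r (4*c+2) m) := by
  cases x <;> cases y <;> simp only [t2] at h <;> try exact absurd h (by simp)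
  case r.r a j b l =>
    split_ifs at h with h1 h2 h3
    · obtain ⟨h2a, h2b, h2c⟩ := h2
      exact ⟨a/4, j, by rw [show 4*(a/4)+2 = a from by omega],
        Or.inl (by rw [h2a, show 4*(a/4) = b from by omega])⟩
    · obtain ⟨h3a, h3b, h3c⟩ := h3
      exact ⟨a/4, j, by rw [show 4*(a/4)+2 = a from by omega],
        Or.inr (by rw [h3a, h3c, show 4*(a/4)+2 = a from by omega])⟩

lemma key (p) (h : M11 p) :
    (∃ u v i j l k a, p = (A2.r u v, A2.r i j, a, A2.r l k)) →
    (∃ x y, p = (x, y, x, y)) ∨ (∃ x y, p = (x, x, y, y)) := by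
  induction h with
  | col x y => exact fun _ => Or.inr ⟨x, y, rfl⟩
  | row x y => exact fun _ => Or.inl ⟨x, y, rfl⟩
  | app a₁ a₂ a₃ a₄ b₁ b₂ b₃ b₄ hA hB ihA ihB =>
    rintro ⟨u, v, i, j, l, k, a, heq⟩
    obtain ⟨e1, e2, e3, e4⟩ : t2 a₁ b₁ = A2.r u v ∧ t2 a₂ b₂ = A2.r i j ∧
        t2 a₃ b₃ = a ∧ t2 a₄ b₄ = A2.r l k := by
      simpa [Prod.ext_iff] using heq
    obtain ⟨c1, m1, hx1, hy1⟩ := tr e1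
    obtain ⟨c2, m2, hx2, hy2⟩ := tr e2
    obtain ⟨c4, m4, hx4, hy4⟩ := tr e4
    have IA := ihA ⟨_, _, _, _, _, _, a₃, by rw [hx1, hx2, hx4]⟩
    have hb1 : ∃ c m, b₁ = A2.r c m := by rcases hy1 with h | h <;> exact ⟨_, _, h⟩
    have hb2 : ∃ c m, b₂ = A2.r c m := by rcases hy2 with h | h <;> exact ⟨_, _, h⟩
    have hb4 : ∃ c m, b₄ = A2.r c m := by rcases hy4 with h | h <;> exact ⟨_, _, h⟩
    obtain ⟨d1, n1, hb1⟩ := hb1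
    obtain ⟨d2, n2, hb2⟩ := hb2
    obtain ⟨d4, n4, hb4⟩ := hb4
    have IB := ihB ⟨_, _, _, _, _, _, b₃, by rw [hb1, hb2, hb4]⟩
    rcases IA with ⟨x, y, hA'⟩ | ⟨x, y, hA'⟩ <;>
      rcases IB with ⟨x', y', hB'⟩ | ⟨x', y', hB'⟩
    · -- A row, B row
      obtain ⟨f1, f2, f3, f4⟩ : a₁ = x ∧ a₂ = y ∧ a₃ = x ∧ a₄ = y := by
        simpa [Prod.ext_iff] using hA'
      obtain ⟨g1, g2, g3, g4⟩ : b₁ = x' ∧ b₂ = y' ∧ b₃ = x' ∧ b₄ = y' := by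
        simpa [Prod.ext_iff] using hB'
      subst f1 f2 f3 f4 g1 g2 g3 g4
      exact Or.inl ⟨_, _, rfl⟩
    · -- A row, B col : force a₂ = a₁
      obtain ⟨f1, f2, f3, f4⟩ : a₁ = x ∧ a₂ = y ∧ a₃ = x ∧ a₄ = y := by
        simpa [Prod.ext_iff] using hA'
      obtain ⟨g1, g2, g3, g4⟩ : b₁ = x' ∧ b₂ = x' ∧ b₃ = y' ∧ b₄ = y' := by
        simpa [Prod.ext_iff] using hB'
      have hb12 : b₂ = b₁ := by rw [g1, g2]
      have hxy : a₂ = a₁ := by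
        rw [hb12] at hy2
        rcases hy1 with h | h <;> rcases hy2 with h' | h' <;>
          rw [h] at h' <;>
          · injection h' with e f
            rw [hx1, hx2]
            congr 1 <;> omega
      have ha13 : a₃ = a₁ := by rw [f3, f1]
      have ha24 : a₄ = a₂ := by rw [f4, f2]
      rw [hxy, hb12, ha13, ha24, hxy, show b₄ = b₃ from by rw [g3, g4]]
      exact Or.inr ⟨_, _, rfl⟩
    · -- A col, B row : force a₄ = a₂
      obtain ⟨f1, f2, f3, f4⟩ : a₁ = x ∧ a₂ = x ∧ a₃ = y ∧ a₄ = y := by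
        simpa [Prod.ext_iff] using hA'
      obtain ⟨g1, g2, g3, g4⟩ : b₁ = x' ∧ b₂ = y' ∧ b₃ = x' ∧ b₄ = y' := by
        simpa [Prod.ext_iff] using hB'
      have hb24 : b₄ = b₂ := by rw [g2, g4]
      have hxy : a₄ = a₂ := by
        rw [hb24] at hy4
        rcases hy2 with h | h <;> rcases hy4 with h' | h' <;>
          rw [h] at h' <;>
          · injection h' with e f
            rw [hx2, hx4]
            congr 1 <;> omega
      have ha12 : a₂ = a₁ := by rw [f2, f1]
      have ha34 : a₃ = a₄ := by rw [f3, f4]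
      rw [hb24, ha34, hxy, ha12, show b₃ = b₁ from by rw [g1, g3]]
      exact Or.inl ⟨_, _, rfl⟩
    · -- A col, B col
      obtain ⟨f1, f2, f3, f4⟩ : a₁ = x ∧ a₂ = x ∧ a₃ = y ∧ a₄ = y := by
        simpa [Prod.ext_iff] using hA'
      obtain ⟨g1, g2, g3, g4⟩ : b₁ = x' ∧ b₂ = x' ∧ b₃ = y' ∧ b₄ = y' := by
        simpa [Prod.ext_iff] using hB'
      subst f1 f2 f3 f4 g1 g2 g3 g4
      exact Or.inr ⟨_, _, rfl⟩

theorem stmt6 (u v i j l k : ℕ) (a : A2)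
    (h : M11 (A2.r u v, A2.r i j, a, A2.r l k)) :
    (∃ x y : A2, (A2.r u v, A2.r i j, a, A2.r l k) = (x, y, x, y)) ∨
    (∃ x y : A2, (A2.r u v, A2.r i j, a, A2.r l k) = (x, x, y, y)) := by
  exact key _ h ⟨u, v, i, j, l, k, a, rfl⟩
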